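/- arXiv:1502.01567 — 2 statements merged into one kernel-verified Lean document; each statement's English description precedes it below -/
import Mathlib

section
/- Fix $r_i \in (0,1]$ and a degree distribution $\Omega$ with $\Omega_j \geq 0$, $\sum_{j=1}^d \Omega_j = 1$. Define $f(\tilde w, \tilde l) = r_i H_b(\tilde l) + \tilde w \log_2 p_{\tilde l} + (1-\tilde w)\log_2(1 - p_{\tilde l})$ where $p_{\tilde l} = \sum_j \Omega_j \frac{1}{2}(1-(1-2\tilde l)^j)$, and $f_{\max}(\tilde w) = \sup_{\tilde l \in (0,1)} f(\tilde w, \tilde l)$. Then $f_{\max}$ is right-continuous at $\tilde w = 0$: $\lim_{\tilde w \to 0^+} f_{\max}(\tilde w) = f_{\max}(0) = \sup_{\tilde l \in (0,1)}\left[r_i H_b(\tilde l) + \log_2(1 - p_{\tilde l})\right]$. -/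
open Filter

set_option maxHeartbeats 1000000 in
/-- Right-continuity of `f_max` at `w̃ = 0` in the Raptor growth-rate analysis:
`lim_{w̃→0⁺} f_max(w̃) = f_max(0) = sup_{l̃∈(0,1)} [rᵢ H_b(l̃) + log₂(1 - p_l̃)]`. -/
theorem fmax_right_continuous (ri : ℝ) (hri0 : 0 < ri) (hri1 : ri ≤ 1)
    (d : ℕ) (hd : 1 ≤ d) (Ω : ℕ → ℝ) (hΩ : ∀ j, 0 ≤ Ω j)
    (hsum : ∑ j ∈ Finset.Icc 1 d, Ω j = 1)
    (p : ℝ → ℝ)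
    (hp : ∀ l, p l = ∑ j ∈ Finset.Icc 1 d, Ω j * ((1 - (1 - 2 * l) ^ j) / 2))
    (Hb : ℝ → ℝ)
    (hHb : ∀ x, Hb x = -(x * Real.logb 2 x) - (1 - x) * Real.logb 2 (1 - x))
    (f : ℝ → ℝ → ℝ)
    (hf : ∀ w l, f w l = ri * Hb l + w * Real.logb 2 (p l) +
      (1 - w) * Real.logb 2 (1 - p l))
    (fmax : ℝ → ℝ)
    (hfmax : ∀ w, fmax w = sSup ((fun l => f w l) '' Set.Ioo (0 : ℝ) 1)) :
    Tendsto fmax (nhdsWithin 0 (Set.Ioi 0)) (nhds (fmax 0)) ∧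
    fmax 0 = sSup ((fun l => ri * Hb l + Real.logb 2 (1 - p l)) '' Set.Ioo (0 : ℝ) 1) := by
  -- some Ω j is positive
  have hj0 : ∃ j ∈ Finset.Icc 1 d, 0 < Ω j := by
    by_contra h
    push_neg at h
    have : ∑ j ∈ Finset.Icc 1 d, Ω j = 0 :=
      Finset.sum_eq_zero fun j hj => le_antisymm (h j hj) (hΩ j)
    rw [hsum] at this; norm_num at this
  obtain ⟨j0, hj0m, hj0p⟩ := hj0
  -- bounds on p
  have hterm : ∀ l ∈ Set.Ioo (0:ℝ) 1, ∀ j ∈ Finset.Icc 1 d,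
      0 < (1 - (1 - 2 * l) ^ j) / 2 ∧ (1 - (1 - 2 * l) ^ j) / 2 < 1 := by
    intro l hl j hj
    have h1 : |1 - 2 * l| < 1 := by
      rw [abs_lt]; constructor <;> nlinarith [hl.1, hl.2]
    have hj1 : 1 ≤ j := (Finset.mem_Icc.mp hj).1
    have h2 : |(1 - 2 * l) ^ j| < 1 := by
      rw [abs_pow]
      calc |1 - 2 * l| ^ j ≤ |1 - 2 * l| ^ 1 :=
            pow_le_pow_of_le_one (abs_nonneg _) h1.le hj1
        _ < 1 := by simpa using h1
    rw [abs_lt] at h2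
    constructor <;> nlinarith [h2.1, h2.2]
  have hpb : ∀ l ∈ Set.Ioo (0:ℝ) 1, 0 < p l ∧ p l < 1 := by
    intro l hl
    have h1 : 0 < p l := by
      rw [hp]
      have hle : Ω j0 * ((1 - (1 - 2 * l) ^ j0) / 2) ≤
          ∑ j ∈ Finset.Icc 1 d, Ω j * ((1 - (1 - 2 * l) ^ j) / 2) :=
        Finset.single_le_sum (fun j hj => mul_nonneg (hΩ j) (hterm l hl j hj).1.le) hj0m
      have := (hterm l hl j0 hj0m).1
      nlinarith
    have h2 : p l < 1 := by
      have key : 1 - p l = ∑ j ∈ Finset.Icc 1 d, Ω j * (1 - (1 - (1 - 2 * l) ^ j) / 2) := by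
        have e : ∑ j ∈ Finset.Icc 1 d, Ω j * (1 - (1 - (1 - 2 * l) ^ j) / 2) =
            (∑ j ∈ Finset.Icc 1 d, Ω j) -
              ∑ j ∈ Finset.Icc 1 d, Ω j * ((1 - (1 - 2 * l) ^ j) / 2) := by
          rw [← Finset.sum_sub_distrib]
          exact Finset.sum_congr rfl fun j _ => by ring
        rw [hp, e, hsum]
      have hle : Ω j0 * (1 - (1 - (1 - 2 * l) ^ j0) / 2) ≤
          ∑ j ∈ Finset.Icc 1 d, Ω j * (1 - (1 - (1 - 2 * l) ^ j) / 2) :=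
        Finset.single_le_sum (f := fun j => Ω j * (1 - (1 - (1 - 2 * l) ^ j) / 2))
          (fun j hj => mul_nonneg (hΩ j) (by nlinarith [(hterm l hl j hj).2])) hj0m
      have := (hterm l hl j0 hj0m).2
      nlinarith
    exact ⟨h1, h2⟩
  -- logs nonpositive
  have hlogp : ∀ l ∈ Set.Ioo (0:ℝ) 1, Real.logb 2 (p l) ≤ 0 := fun l hl =>
    Real.logb_nonpos one_lt_two (hpb l hl).1.le (hpb l hl).2.le
  have hlogq : ∀ l ∈ Set.Ioo (0:ℝ) 1, Real.logb 2 (1 - p l) ≤ 0 := fun l hl =>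
    Real.logb_nonpos one_lt_two (by linarith [(hpb l hl).2]) (by linarith [(hpb l hl).1])
  -- entropy bounds
  have hln2 : (0.6931471803 : ℝ) < Real.log 2 := Real.log_two_gt_d9
  have hent : ∀ x : ℝ, 0 < x → x < 1 →
      0 ≤ -(x * Real.logb 2 x) ∧ -(x * Real.logb 2 x) ≤ 2 := by
    intro x hx0 hx1
    have hlog : Real.logb 2 x ≤ 0 := Real.logb_nonpos one_lt_two hx0.le hx1.le
    constructor
    · nlinarith
    · have h1 : Real.log x⁻¹ ≤ x⁻¹ - 1 := Real.log_le_sub_one_of_pos (by positivity)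
      rw [Real.log_inv] at h1
      have h2 : -(x * Real.log x) ≤ 1 - x := by
        have : -Real.log x ≤ x⁻¹ - 1 := by linarith
        have hxinv : x * x⁻¹ = 1 := mul_inv_cancel₀ hx0.ne'
        nlinarith
      rw [Real.logb, div_eq_mul_inv]
      have hinv : (Real.log 2)⁻¹ ≤ 2 := by
        rw [inv_le_comm₀ (by linarith) (by norm_num)]
        linarith
      have hinv0 : (0:ℝ) ≤ (Real.log 2)⁻¹ := by positivity
      nlinarith
  have hHb_bd : ∀ l ∈ Set.Ioo (0:ℝ) 1, 0 ≤ Hb l ∧ Hb l ≤ 4 := by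
    intro l hl
    rw [hHb]
    obtain ⟨h1, h2⟩ := hent l hl.1 hl.2
    obtain ⟨h3, h4⟩ := hent (1 - l) (by linarith [hl.2]) (by linarith [hl.1])
    constructor <;> nlinarith
  -- uniform upper bound on f
  have hfub : ∀ w : ℝ, 0 ≤ w → w ≤ 1 → ∀ l ∈ Set.Ioo (0:ℝ) 1, f w l ≤ 4 := by
    intro w hw0 hw1 l hl
    rw [hf]
    have h1 := hHb_bd l hl
    have h2 := hlogp l hl
    have h3 := hlogq l hl
    nlinarith [mul_nonneg hw0 (neg_nonneg.mpr h2),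
      mul_nonneg (by linarith : (0:ℝ) ≤ 1 - w) (neg_nonneg.mpr h3)]
  have hmem12 : (1/2 : ℝ) ∈ Set.Ioo (0:ℝ) 1 := by norm_num
  have hne : ∀ w : ℝ, ((fun l => f w l) '' Set.Ioo (0:ℝ) 1).Nonempty :=
    fun w => ⟨f w (1/2), ⟨1/2, hmem12, rfl⟩⟩
  have hbdd : ∀ w : ℝ, 0 ≤ w → w ≤ 1 → BddAbove ((fun l => f w l) '' Set.Ioo (0:ℝ) 1) := by
    intro w hw0 hw1
    exact ⟨4, by rintro y ⟨l, hl, rfl⟩; exact hfub w hw0 hw1 l hl⟩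
  -- the difference identity
  have hdiff : ∀ w l, f w l = f 0 l + w * (Real.logb 2 (p l) - Real.logb 2 (1 - p l)) := by
    intro w l; rw [hf, hf]; ring
  -- second part
  have hpart2 : fmax 0 = sSup ((fun l => ri * Hb l + Real.logb 2 (1 - p l)) ''
      Set.Ioo (0 : ℝ) 1) := by
    rw [hfmax]
    congr 1
    have : (fun l => f 0 l) = fun l => ri * Hb l + Real.logb 2 (1 - p l) := by
      funext l; rw [hf]; ring
    rw [this]
  refine ⟨?_, hpart2⟩
  -- first part: tendsto
  rw [Metric.tendsto_nhdsWithin_nhds]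
  intro ε hε
  have hS0ne := hne 0
  have hS0bdd := hbdd 0 le_rfl zero_le_one
  have hfmax0 : fmax 0 = sSup ((fun l => f 0 l) '' Set.Ioo (0:ℝ) 1) := hfmax 0
  -- pick a near-optimal l₀
  obtain ⟨y, hymem, hylt⟩ := exists_lt_of_lt_csSup hS0ne
    (show fmax 0 - ε/2 < sSup ((fun l => f 0 l) '' Set.Ioo (0:ℝ) 1) by
      rw [← hfmax0]; linarith)
  obtain ⟨l₀, hl₀, rfl⟩ := hymem
  have hylt' : fmax 0 - ε / 2 < f 0 l₀ := hylt
  obtain ⟨K, hK0, hKbd⟩ : ∃ K : ℝ, 0 < K ∧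
      -K ≤ Real.logb 2 (p l₀) - Real.logb 2 (1 - p l₀) := by
    refine ⟨|Real.logb 2 (p l₀)| + |Real.logb 2 (1 - p l₀)| + 1, by positivity, ?_⟩
    have := neg_abs_le (Real.logb 2 (p l₀))
    have := le_abs_self (Real.logb 2 (1 - p l₀))
    have := abs_nonneg (Real.logb 2 (p l₀))
    have := abs_nonneg (Real.logb 2 (1 - p l₀))
    linarith
  obtain ⟨M, hM0, hMa⟩ : ∃ M : ℝ, 0 < M ∧ 4 - M / 2 ≤ fmax 0 := by
    refine ⟨8 + 2 * |fmax 0|, by positivity, ?_⟩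
    have := neg_abs_le (fmax 0)
    linarith
  refine ⟨min (min (ε / (2 * K)) (ε / (2 * M))) (1/2), by positivity, ?_⟩
  intro w hw hwd
  have hw0 : 0 < w := hw
  rw [Real.dist_eq, sub_zero, abs_of_pos hw0] at hwd
  have hwK : w < ε / (2 * K) := lt_of_lt_of_le hwd (le_trans (min_le_left _ _) (min_le_left _ _))
  have hwM : w < ε / (2 * M) := lt_of_lt_of_le hwd (le_trans (min_le_left _ _) (min_le_right _ _))
  have hw12 : w ≤ 1/2 := le_of_lt (lt_of_lt_of_le hwd (min_le_right _ _))
  have hw1 : w ≤ 1 := by linarith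
  have hwK' : w * K < ε / 2 := by
    rw [lt_div_iff₀ (by positivity : (0:ℝ) < 2 * K)] at hwK
    nlinarith
  have hwM' : w * M < ε / 2 := by
    rw [lt_div_iff₀ (by positivity : (0:ℝ) < 2 * M)] at hwM
    nlinarith
  -- lower bound : fmax w > fmax 0 - ε
  have hlow : fmax 0 - ε < fmax w := by
    have h1 : f w l₀ ≤ fmax w := by
      rw [hfmax]
      exact le_csSup (hbdd w hw0.le hw1) ⟨l₀, hl₀, rfl⟩
    have h2 : f w l₀ = f 0 l₀ + w * (Real.logb 2 (p l₀) - Real.logb 2 (1 - p l₀)) :=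
      hdiff w l₀
    have h4 : w * (Real.logb 2 (p l₀) - Real.logb 2 (1 - p l₀)) ≥ -(w * K) := by
      nlinarith
    linarith
  -- upper bound : fmax w ≤ fmax 0 + ε / 2
  have hup : fmax w ≤ fmax 0 + ε / 2 := by
    rw [hfmax w]
    apply csSup_le (hne w)
    rintro y ⟨l, hl, rfl⟩
    show f w l ≤ fmax 0 + ε / 2
    have hf0le : f 0 l ≤ fmax 0 := by
      rw [hfmax0]
      exact le_csSup hS0bdd ⟨l, hl, rfl⟩
    by_cases hcase : -M ≤ Real.logb 2 (1 - p l)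
    · have h2 : Real.logb 2 (p l) - Real.logb 2 (1 - p l) ≤ M := by
        have := hlogp l hl
        linarith
      have h3 : w * (Real.logb 2 (p l) - Real.logb 2 (1 - p l)) ≤ w * M :=
        mul_le_mul_of_nonneg_left h2 hw0.le
      rw [hdiff w l]
      linarith
    · push_neg at hcase
      have h1 : ri * Hb l ≤ 4 := by
        obtain ⟨ha, hb⟩ := hHb_bd l hl
        nlinarith
      have h2 : w * Real.logb 2 (p l) ≤ 0 :=
        mul_nonpos_of_nonneg_of_nonpos hw0.le (hlogp l hl)
      have h3 : (1 - w) * Real.logb 2 (1 - p l) ≤ (1 - w) * (-M) :=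
        mul_le_mul_of_nonneg_left hcase.le (by linarith)
      have h4 : (1 - w) * (-M) ≤ -(M / 2) := by nlinarith
      have h5 : f w l ≤ 4 - M / 2 := by rw [hf]; linarith
      linarith
  rw [Real.dist_eq, abs_lt]
  constructor <;> linarith
end

section
/- With $G$ as in the Raptor growth-rate analysis, if $r_i(1-r_o) < f_{\max}(0)$ then $\limsup_{\tilde w \to 0^+} G(\tilde w) > 0$, and consequently the typical minimum distance $\bar d_{\min} = \inf\{\tilde w > 0 : G(\tilde w) > 0\}$ equals 0. -/
open Filter

/-- If `rᵢ(1-r_o) < f_max(0)` then `limsup_{w̃→0⁺} G(w̃) > 0` and the typical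
minimum distance `inf{w̃ > 0 : G(w̃) > 0}` equals `0`. -/
theorem zero_typical_min_distance (ri ro : ℝ) (hri0 : 0 < ri) (hri1 : ri ≤ 1)
    (hro0 : 0 < ro) (hro1 : ro < 1)
    (d : ℕ) (hd : 1 ≤ d) (Ω : ℕ → ℝ) (hΩ : ∀ j, 0 ≤ Ω j)
    (hsum : ∑ j ∈ Finset.Icc 1 d, Ω j = 1)
    (p : ℝ → ℝ)
    (hp : ∀ l, p l = ∑ j ∈ Finset.Icc 1 d, Ω j * ((1 - (1 - 2 * l) ^ j) / 2))
    (Hb : ℝ → ℝ)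
    (hHb : ∀ x, Hb x = -(x * Real.logb 2 x) - (1 - x) * Real.logb 2 (1 - x))
    (fmax : ℝ → ℝ)
    (hfmax : ∀ w, fmax w = sSup ((fun l => ri * Hb l + w * Real.logb 2 (p l) +
      (1 - w) * Real.logb 2 (1 - p l)) '' Set.Ioo (0 : ℝ) 1))
    (hcont : Tendsto fmax (nhdsWithin 0 (Set.Ioi 0)) (nhds (fmax 0)))
    (G : ℝ → ℝ) (hG : ∀ w, G w = Hb w - ri * (1 - ro) + fmax w)
    (hneg : ri * (1 - ro) < fmax 0) :
    0 < limsup G (nhdsWithin 0 (Set.Ioi 0)) ∧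
    (∀ ε > (0 : ℝ), ∃ w : ℝ, 0 < w ∧ w < ε ∧ 0 < G w) ∧
    sInf {w : ℝ | 0 < w ∧ 0 < G w} = 0 := by
  -- Hb is continuous with Hb(x) → 0 as x → 0
  have hHbfun : Hb = fun x : ℝ =>
      (-(x * Real.log x) - ((1 - x) * Real.log (1 - x))) / Real.log 2 := by
    funext x
    rw [hHb x]
    simp [Real.logb, div_eq_mul_inv]
    ring
  have hHbcont : Continuous Hb := by
    rw [hHbfun]
    exact ((Real.continuous_mul_log.neg.sub
      (Real.continuous_mul_log.comp (continuous_const.sub continuous_id))).div_const _)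
  have hHb0 : Hb 0 = 0 := by rw [hHb]; simp
  have hHbtend : Tendsto Hb (nhdsWithin 0 (Set.Ioi 0)) (nhds 0) := by
    have := hHbcont.continuousAt (x := (0:ℝ))
    rw [ContinuousAt, hHb0] at this
    exact this.mono_left nhdsWithin_le_nhds
  -- G tends to L := fmax 0 - ri*(1-ro) > 0
  set L : ℝ := fmax 0 - ri * (1 - ro) with hL
  have hLpos : 0 < L := by simp [hL]; linarith
  have hGtend : Tendsto G (nhdsWithin 0 (Set.Ioi 0)) (nhds L) := by
    have : Tendsto (fun w => Hb w - ri * (1 - ro) + fmax w)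
        (nhdsWithin 0 (Set.Ioi 0)) (nhds (0 - ri * (1 - ro) + fmax 0)) :=
      (hHbtend.sub_const _).add hcont
    have heq : G = fun w => Hb w - ri * (1 - ro) + fmax w := funext hG
    rw [heq, hL]
    convert this using 2
    ring
  have hlimsup : limsup G (nhdsWithin 0 (Set.Ioi 0)) = L := hGtend.limsup_eq
  -- eventually G > 0
  have hev : ∀ᶠ w in nhdsWithin 0 (Set.Ioi 0), 0 < G w :=
    hGtend.eventually (eventually_gt_nhds hLpos)
  have key : ∀ ε > (0 : ℝ), ∃ w : ℝ, 0 < w ∧ w < ε ∧ 0 < G w := by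
    intro ε hε
    have h1 : ∀ᶠ w : ℝ in nhdsWithin 0 (Set.Ioi 0), w < ε :=
      (eventually_lt_nhds hε).filter_mono nhdsWithin_le_nhds
    have h2 : ∀ᶠ w : ℝ in nhdsWithin 0 (Set.Ioi 0), 0 < w :=
      self_mem_nhdsWithin
    have hall : ∀ᶠ w : ℝ in nhdsWithin 0 (Set.Ioi 0), 0 < w ∧ w < ε ∧ 0 < G w := by
      filter_upwards [h1, h2, hev] with w hw1 hw2 hw3
      exact ⟨hw2, hw1, hw3⟩
    exact hall.exists
  refine ⟨by rw [hlimsup]; exact hLpos, key, ?_⟩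
  set S := {w : ℝ | 0 < w ∧ 0 < G w}
  have hnonneg : 0 ≤ sInf S := Real.sInf_nonneg (fun x hx => le_of_lt hx.1)
  have hle : sInf S ≤ 0 := by
    by_contra h
    push_neg at h
    obtain ⟨w, hw0, hwε, hwG⟩ := key (sInf S) h
    have hbdd : BddBelow S := ⟨0, fun x hx => le_of_lt hx.1⟩
    have hmem : w ∈ S := ⟨hw0, hwG⟩
    exact absurd (csInf_le hbdd hmem) (not_le.mpr hwε)
  linarith
end
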